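/- arXiv:1003.5097 — 3 statements merged into one kernel-verified Lean document; each statement's English description precedes it below -/
import Mathlib

section
/- Let β > 0, m > 0, 0 < α < 1, and define r_L = [log(1 + αβL)/log(1 + βL)] · Q(mL, αmL), where Q(a,x) = Γ(a,x)/Γ(a). Then r_L → 1 as L → ∞. -/
/-!
Write `γ(a, x) = ∫₀ˣ t^(a-1) e^(-t) dt`, so that `Q(a, x) = 1 - γ(a, x) / Γ(a)`.
Since `log (1 + αβL) - log (1 + βL) → log α` while `log (1 + βL) → ∞`, the logarithmic
factor tends to `1`. For the other factor, the integrand `t^(a-1) e^(-t)` increases up to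
`t = a - 1 ≥ αa`, so `γ(a, αa) ≤ αa · (αa)^(a-1) e^(-αa)`, while the slice `(a, a + 1]` of the
Gamma integral gives `Γ(a) ≥ a^(a-1) e^(-(a+1))`. The quotient of these bounds is
`e · a · exp (-(α - 1 - log α) a)`, which tends to `0` because `log α < α - 1` for `α ≠ 1`.
-/

open Filter

noncomputable def upperIncGamma (a x : ℝ) : ℝ :=
  ∫ t in Set.Ioi x, t ^ (a - 1) * Real.exp (-t)

noncomputable def normUpperIncGamma (a x : ℝ) : ℝ :=
  upperIncGamma a x / Real.Gamma a

open Real MeasureTheory Set Topology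

noncomputable def lowerIncGamma (a x : ℝ) : ℝ :=
  ∫ t in Ioc 0 x, t ^ (a - 1) * exp (-t)

section IncompleteGamma

variable {a x : ℝ}

lemma integrableOn_rpow_sub_one_mul_exp_neg (ha : 0 < a) :
    IntegrableOn (fun t : ℝ => t ^ (a - 1) * exp (-t)) (Ioi 0) := by
  simpa only [mul_comm] using GammaIntegral_convergent ha

lemma Gamma_eq_integral_rpow_sub_one_mul_exp_neg (ha : 0 < a) :
    Gamma a = ∫ t in Ioi 0, t ^ (a - 1) * exp (-t) := by
  simp only [Gamma_eq_integral ha, mul_comm]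

lemma lowerIncGamma_add_upperIncGamma (ha : 0 < a) (hx : 0 ≤ x) :
    lowerIncGamma a x + upperIncGamma a x = Gamma a := by
  have hint := integrableOn_rpow_sub_one_mul_exp_neg ha
  rw [← Ioc_union_Ioi_eq_Ioi hx] at hint
  rw [Gamma_eq_integral_rpow_sub_one_mul_exp_neg ha, ← Ioc_union_Ioi_eq_Ioi hx,
    setIntegral_union (Ioc_disjoint_Ioi le_rfl) measurableSet_Ioi
      (hint.mono_set subset_union_left) (hint.mono_set subset_union_right)]
  rfl

lemma normUpperIncGamma_eq_one_sub (ha : 0 < a) (hx : 0 ≤ x) :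
    normUpperIncGamma a x = 1 - lowerIncGamma a x / Gamma a := by
  rw [normUpperIncGamma, eq_sub_iff_add_eq, ← add_div, add_comm,
    lowerIncGamma_add_upperIncGamma ha hx, div_self (Gamma_pos_of_pos ha).ne']

lemma lowerIncGamma_nonneg : 0 ≤ lowerIncGamma a x :=
  setIntegral_nonneg measurableSet_Ioc fun _ ht ↦
    mul_nonneg (rpow_nonneg ht.1.le _) (exp_nonneg _)

lemma rpow_sub_one_mul_exp_neg_le {t : ℝ} (ht : 0 < t) (htx : t ≤ x) (hxa : x ≤ a - 1) :
    t ^ (a - 1) * exp (-t) ≤ x ^ (a - 1) * exp (-x) := by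
  have hx : 0 < x := ht.trans_le htx
  rw [rpow_def_of_pos ht, rpow_def_of_pos hx, ← exp_add, ← exp_add, exp_le_exp]
  have hlog_nonpos : log t - log x ≤ 0 := sub_nonpos.2 (log_le_log ht htx)
  have hlog_le : x * (log t - log x) ≤ t - x := by
    have := log_le_sub_one_of_pos (div_pos ht hx)
    rw [log_div ht.ne' hx.ne'] at this
    calc x * (log t - log x) ≤ x * (t / x - 1) := mul_le_mul_of_nonneg_left this hx.le
      _ = t - x := by field_simp
  nlinarith [mul_le_mul_of_nonpos_right hxa hlog_nonpos]

lemma lowerIncGamma_le (hx : 0 < x) (hxa : x ≤ a - 1) :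
    lowerIncGamma a x ≤ x ^ (a - 1) * exp (-x) * x := by
  have hbound := norm_setIntegral_le_of_norm_le_const (μ := volume)
    (f := fun t : ℝ ↦ t ^ (a - 1) * exp (-t)) (C := x ^ (a - 1) * exp (-x))
    measure_Ioc_lt_top fun t ht ↦ by
      rw [norm_of_nonneg (mul_nonneg (rpow_nonneg ht.1.le _) (exp_nonneg _))]
      exact rpow_sub_one_mul_exp_neg_le ht.1 ht.2 hxa
  rw [volume_real_Ioc_of_le hx.le, sub_zero] at hbound
  exact (le_abs_self _).trans hbound

lemma rpow_sub_one_mul_exp_neg_le_Gamma (ha : 1 ≤ a) {s : ℝ} (hs : 0 < s) :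
    s ^ (a - 1) * exp (-(s + 1)) ≤ Gamma a := by
  have hint := integrableOn_rpow_sub_one_mul_exp_neg (zero_lt_one.trans_le ha)
  have hsub : Ioc s (s + 1) ⊆ Ioi 0 := fun t ht ↦ hs.trans ht.1
  calc s ^ (a - 1) * exp (-(s + 1))
      = s ^ (a - 1) * exp (-(s + 1)) * volume.real (Ioc s (s + 1)) := by
        rw [volume_real_Ioc_of_le (by linarith), add_sub_cancel_left, mul_one]
    _ ≤ ∫ t in Ioc s (s + 1), t ^ (a - 1) * exp (-t) :=
        setIntegral_ge_of_const_le_real measurableSet_Ioc measure_Ioc_lt_top.ne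
          (fun t ht ↦ mul_le_mul (rpow_le_rpow hs.le ht.1.le (by linarith))
            (exp_le_exp.2 (by linarith [ht.2])) (exp_pos _).le
            (rpow_nonneg (hs.trans ht.1).le _))
          (hint.mono_set hsub)
    _ ≤ ∫ t in Ioi 0, t ^ (a - 1) * exp (-t) :=
        setIntegral_mono_set hint
          ((ae_restrict_mem measurableSet_Ioi).mono fun t ht ↦
            mul_nonneg (rpow_nonneg (le_of_lt ht) _) (exp_nonneg _))
          hsub.eventuallyLE
    _ = Gamma a := (Gamma_eq_integral_rpow_sub_one_mul_exp_neg (zero_lt_one.trans_le ha)).symm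

lemma lowerIncGamma_mul_div_Gamma_le {α : ℝ} (hα : 0 < α) (ha : 1 ≤ a) (hαa : α * a ≤ a - 1) :
    lowerIncGamma a (α * a) / Gamma a ≤ exp 1 * (a * exp (-(α - 1 - log α) * a)) := by
  have ha0 : 0 < a := zero_lt_one.trans_le ha
  have hden : 0 < a ^ (a - 1) * exp (-(a + 1)) := by positivity
  calc lowerIncGamma a (α * a) / Gamma a
      ≤ (α * a) ^ (a - 1) * exp (-(α * a)) * (α * a) / (a ^ (a - 1) * exp (-(a + 1))) :=
        div_le_div₀ (by positivity) (lowerIncGamma_le (by positivity) hαa) hden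
          (rpow_sub_one_mul_exp_neg_le_Gamma ha ha0)
    _ = exp 1 * (a * exp (-(α - 1 - log α) * a)) := by
        have hexp : exp (log α * a) * exp (-(α * a))
            = exp 1 * exp (-(α - 1 - log α) * a) * exp (-(a + 1)) := by
          rw [← exp_add, ← exp_add, ← exp_add]; ring_nf
        rw [div_eq_iff hden.ne', mul_rpow hα.le ha0.le, rpow_sub_one hα.ne', rpow_def_of_pos hα]
        field_simp
        linear_combination (norm := ring_nf) hexp

end IncompleteGamma

lemma tendsto_lowerIncGamma_mul_div_Gamma {α : ℝ} (hα0 : 0 < α) (hα1 : α < 1) :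
    Tendsto (fun a ↦ lowerIncGamma a (α * a) / Gamma a) atTop (𝓝 0) := by
  have hδ : 0 < α - 1 - log α := by linarith [log_lt_sub_one_of_pos hα0 hα1.ne]
  have hbound : Tendsto (fun a ↦ exp 1 * (a * exp (-(α - 1 - log α) * a))) atTop (𝓝 0) := by
    simpa only [rpow_one, mul_zero] using
      (tendsto_rpow_mul_exp_neg_mul_atTop_nhds_zero 1 _ hδ).const_mul (exp 1)
  refine squeeze_zero' ?_ ?_ hbound
  · filter_upwards [eventually_ge_atTop 0] with a ha
    exact div_nonneg lowerIncGamma_nonneg (Gamma_nonneg_of_nonneg ha)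
  · filter_upwards [eventually_ge_atTop (1 / (1 - α))] with a ha
    have hαa : 1 ≤ a * (1 - α) := (div_le_iff₀ (sub_pos.2 hα1)).1 ha
    exact lowerIncGamma_mul_div_Gamma_le hα0 (by nlinarith) (by linarith)

lemma tendsto_normUpperIncGamma_mul {α : ℝ} (hα0 : 0 < α) (hα1 : α < 1) :
    Tendsto (fun a ↦ normUpperIncGamma a (α * a)) atTop (𝓝 1) := by
  have h := (tendsto_lowerIncGamma_mul_div_Gamma hα0 hα1).const_sub 1
  rw [sub_zero] at h
  refine h.congr' ?_
  filter_upwards [eventually_gt_atTop 0] with a ha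
  rw [normUpperIncGamma_eq_one_sub ha (by positivity)]

lemma tendsto_log_one_add_mul_div_log_one_add_mul {a b : ℝ} (ha : 0 < a) (hb : 0 < b) :
    Tendsto (fun L ↦ log (1 + a * L) / log (1 + b * L)) atTop (𝓝 1) := by
  have hden : Tendsto (fun L ↦ 1 + b * L) atTop atTop :=
    tendsto_atTop_add_const_left _ 1 (tendsto_id.const_mul_atTop hb)
  have hlog := tendsto_log_atTop.comp hden
  have hquot : Tendsto (fun L ↦ (1 + a * L) / (1 + b * L)) atTop (𝓝 (a / b)) := by
    have h := (tendsto_const_nhds (x := 1 - a / b)).div_atTop hden |>.const_add (a / b)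
    rw [add_zero] at h
    refine h.congr' ?_
    filter_upwards [eventually_gt_atTop 0] with L hL
    field_simp
    ring
  have hdiff := ((continuousAt_log (div_pos ha hb).ne').tendsto.comp hquot).div_atTop hlog
  have h := hdiff.const_add 1
  rw [add_zero] at h
  refine h.congr' ?_
  filter_upwards [eventually_gt_atTop 0, hlog.eventually_gt_atTop 0] with L hL hlogL
  simp only [Function.comp_apply] at hlogL ⊢
  rw [log_div (by positivity) (by positivity), sub_div, div_self hlogL.ne']
  ring

theorem rL_tendsto_one (α β m : ℝ) (hα0 : 0 < α) (hα1 : α < 1) (hβ : 0 < β)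
    (hm : 0 < m) :
    Tendsto (fun L : ℝ =>
        (Real.log (1 + α * β * L) / Real.log (1 + β * L)) *
          normUpperIncGamma (m * L) (α * m * L)) atTop (nhds 1) := by
  have hQ := (tendsto_normUpperIncGamma_mul hα0 hα1).comp (tendsto_id.const_mul_atTop hm)
  have h := (tendsto_log_one_add_mul_div_log_one_add_mul (mul_pos hα0 hβ) hβ).mul hQ
  rw [mul_one] at h
  simpa only [Function.comp_apply, id, mul_assoc] using h
end

section
/- Let γ_L be gamma-distributed with shape mL and scale θ (m, θ > 0), and let μ_L = θmL. Then for any fixed P > 0 and N₀ > 0, the ratio E[log(1 + (P/N₀)γ_L)] / log(1 + (P/N₀)μ_L) tends to 1 as L → ∞. -/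
open MeasureTheory ProbabilityTheory Filter Real Set Topology

/-!
Jensen's inequality for the concave map `x ↦ log (1 + c x)` gives
`E log (1 + cγ) ≤ log (1 + c Eγ)`. Conversely, on the event `γ ≥ Eγ / 2` we have
`log (1 + cγ) ≥ log (1 + c Eγ / 2)`, and by Chebyshev this event has probability at least
`1 - 4 Var γ / (Eγ)²`. Since `log (1 + t / 2) / log (1 + t) → 1`, the ratio tends to one whenever
`Eγ → ∞` and `Var γ / (Eγ)² → 0`. For the Gamma law of shape `a` and rate `r` these are `a / r`
and `1 / a`; the moments come from the identity
`x · gammaPDF a r x = (a / r) · gammaPDF (a + 1) r x`.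
-/

lemma tendsto_log_one_add_half_div_log_one_add :
    Tendsto (fun t => log (1 + t / 2) / log (1 + t)) atTop (𝓝 1) := by
  have hlog : Tendsto (fun t => log (1 + t)) atTop atTop :=
    tendsto_log_atTop.comp (tendsto_atTop_add_const_left _ 1 tendsto_id)
  have hlower : Tendsto (fun t => 1 - log 2 / log (1 + t)) atTop (𝓝 1) := by
    simpa using tendsto_const_nhds.sub (tendsto_const_nhds.div_atTop hlog)
  refine tendsto_of_tendsto_of_tendsto_of_le_of_le' hlower tendsto_const_nhds ?_ ?_ <;>
    filter_upwards [eventually_gt_atTop 0] with t ht <;>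
    have hD : 0 < log (1 + t) := log_pos (by linarith)
  · rw [one_sub_div hD.ne', ← log_div (by positivity) two_ne_zero]
    exact div_le_div_of_nonneg_right (log_le_log (by positivity) (by linarith)) hD.le
  · exact div_le_one_of_le₀ (log_le_log (by positivity) (by linarith)) hD.le

section

variable {Ω : Type*} [MeasurableSpace Ω] {μ : Measure Ω} {X : Ω → ℝ} {c : ℝ}

lemma integrable_log_one_add_mul (hc : 0 ≤ c) (hX0 : 0 ≤ᵐ[μ] X) (hX : Integrable X μ) :
    Integrable (fun ω => log (1 + c * X ω)) μ := by
  have hmeas : AEMeasurable (fun ω => log (1 + c * X ω)) μ :=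
    measurable_log.comp_aemeasurable ((hX.aemeasurable.const_mul c).const_add 1)
  refine (hX.const_mul c).mono' hmeas.aestronglyMeasurable ?_
  filter_upwards [hX0] with ω hω
  have hcX : 0 ≤ c * X ω := mul_nonneg hc hω
  rw [norm_of_nonneg (log_nonneg (by linarith))]
  linarith [log_le_sub_one_of_pos (show 0 < 1 + c * X ω by linarith)]

lemma integral_log_one_add_mul_le [IsProbabilityMeasure μ] (hc : 0 ≤ c) (hX0 : 0 ≤ᵐ[μ] X)
    (hX : Integrable X μ) : ∫ ω, log (1 + c * X ω) ∂μ ≤ log (1 + c * μ[X]) := by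
  have hmean : ∫ ω, (1 + c * X ω) ∂μ = 1 + c * μ[X] := by
    rw [integral_add (integrable_const 1) (hX.const_mul c), integral_const_mul]
    simp
  rw [← hmean]
  have hconcave : ConcaveOn ℝ (Ici 1) log :=
    strictConcaveOn_log_Ioi.concaveOn.subset (Ici_subset_Ioi.2 one_pos) (convex_Ici 1)
  refine hconcave.le_map_integral
    (continuousOn_log.mono fun x hx => (zero_lt_one.trans_le hx).ne') isClosed_Ici ?_
    ((integrable_const 1).add (hX.const_mul c)) (integrable_log_one_add_mul hc hX0 hX)
  filter_upwards [hX0] with ω hω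
  exact le_add_of_nonneg_right (mul_nonneg hc hω)

lemma log_one_add_mul_half_mul_le_integral [IsProbabilityMeasure μ] (hc : 0 ≤ c)
    (hX0 : 0 ≤ᵐ[μ] X) (hX : MemLp X 2 μ) (hmean : 0 < μ[X]) :
    log (1 + c * μ[X] / 2) * (1 - 4 * variance X μ / μ[X] ^ 2) ≤
      ∫ ω, log (1 + c * X ω) ∂μ := by
  set m := μ[X]
  set ε := log (1 + c * m / 2)
  have hε : 0 ≤ ε := log_nonneg (by have := mul_nonneg hc hmean.le; linarith)
  have hmarkov := mul_meas_ge_le_integral_of_nonneg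
    (hX0.mono fun ω hω => log_nonneg (by have := mul_nonneg hc hω; linarith))
    (integrable_log_one_add_mul hc hX0 (hX.integrable one_le_two)) ε
  have hcheb : μ.real {ω | m / 2 ≤ |X ω - m|} ≤ variance X μ / (m / 2) ^ 2 :=
    ENNReal.toReal_le_of_le_ofReal (div_nonneg (variance_nonneg X μ) (by positivity))
      (meas_ge_le_variance_div_sq hX (by positivity))
  have hcover : univ ⊆ {ω | ε ≤ log (1 + c * X ω)} ∪ {ω | m / 2 ≤ |X ω - m|} := by
    intro ω _
    by_cases h : m / 2 ≤ X ω
    · left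
      exact log_le_log (by positivity) (by nlinarith)
    · right
      show m / 2 ≤ |X ω - m|
      rw [abs_sub_comm, le_abs]
      left; linarith
  have hprob : 1 - 4 * variance X μ / m ^ 2 ≤ μ.real {ω | ε ≤ log (1 + c * X ω)} := by
    have := (measureReal_mono (μ := μ) hcover).trans (measureReal_union_le _ _)
    rw [probReal_univ] at this
    have h4 : variance X μ / (m / 2) ^ 2 = 4 * variance X μ / m ^ 2 := by field_simp; ring
    linarith
  exact (mul_le_mul_of_nonneg_left hprob hε).trans hmarkov

theorem tendsto_integral_log_one_add_mul_div_log_one_add_mul_integral {ι : Type*}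
    {l : Filter ι} {μ : ι → Measure Ω} (hc : 0 < c) (hμ : ∀ᶠ i in l, IsProbabilityMeasure (μ i))
    (hX0 : ∀ᶠ i in l, 0 ≤ᵐ[μ i] X) (hX : ∀ᶠ i in l, MemLp X 2 (μ i))
    (hmean : Tendsto (fun i => (μ i)[X]) l atTop)
    (hvar : Tendsto (fun i => variance X (μ i) / (μ i)[X] ^ 2) l (𝓝 0)) :
    Tendsto (fun i => (∫ ω, log (1 + c * X ω) ∂μ i) / log (1 + c * (μ i)[X])) l (𝓝 1) := by
  have hlower : Tendsto (fun i => log (1 + c * (μ i)[X] / 2) / log (1 + c * (μ i)[X]) *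
      (1 - 4 * variance X (μ i) / (μ i)[X] ^ 2)) l (𝓝 1) := by
    have h := (tendsto_log_one_add_half_div_log_one_add.comp (hmean.const_mul_atTop hc)).mul
      ((tendsto_const_nhds (x := (1 : ℝ))).sub (hvar.const_mul 4))
    simpa only [Function.comp_def, mul_zero, sub_zero, mul_one, mul_div_assoc] using h
  refine tendsto_of_tendsto_of_tendsto_of_le_of_le' hlower tendsto_const_nhds ?_ ?_ <;>
    filter_upwards [hμ, hX0, hX, hmean.eventually_gt_atTop 0] with i _ hi0 hi hpos <;>
    have hD : 0 < log (1 + c * (μ i)[X]) := log_pos (by have := mul_pos hc hpos; linarith)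
  · rw [le_div_iff₀ hD, div_mul_eq_mul_div, div_mul_cancel₀ _ hD.ne']
    exact log_one_add_mul_half_mul_le_integral hc.le hi0 hi hpos
  · exact div_le_one_of_le₀
      (integral_log_one_add_mul_le hc.le hi0 (hi.integrable one_le_two)) hD.le

end

namespace ProbabilityTheory

variable {a r : ℝ}

lemma ae_nonneg_gammaMeasure : ∀ᵐ x ∂gammaMeasure a r, 0 ≤ x := by
  simp only [ae_iff, not_le]
  rw [gammaMeasure, ← Iio, withDensity_apply _ measurableSet_Iio]
  exact lintegral_gammaPDF_of_nonpos le_rfl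

lemma integral_gammaMeasure (ha : 0 < a) (hr : 0 < r) (g : ℝ → ℝ) :
    ∫ x, g x ∂gammaMeasure a r = ∫ x, gammaPDFReal a r x * g x := by
  rw [gammaMeasure, integral_withDensity_eq_integral_toReal_smul (f := gammaPDF a r)
    (measurable_gammaPDFReal a r).ennreal_ofReal (ae_of_all _ fun _ => ENNReal.ofReal_lt_top)]
  simp only [gammaPDF, ENNReal.toReal_ofReal (gammaPDFReal_nonneg ha hr _), smul_eq_mul]

lemma integrable_gammaMeasure_iff (ha : 0 < a) (hr : 0 < r) {g : ℝ → ℝ} :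
    Integrable g (gammaMeasure a r) ↔ Integrable (fun x => gammaPDFReal a r x * g x) := by
  rw [gammaMeasure, integrable_withDensity_iff_integrable_smul' (f := gammaPDF a r)
    (measurable_gammaPDFReal a r).ennreal_ofReal (ae_of_all _ fun _ => ENNReal.ofReal_lt_top)]
  simp only [gammaPDF, ENNReal.toReal_ofReal (gammaPDFReal_nonneg ha hr _), smul_eq_mul]

lemma mul_gammaPDFReal (ha : 0 < a) (hr : 0 < r) (x : ℝ) :
    x * gammaPDFReal a r x = a / r * gammaPDFReal (a + 1) r x := by
  unfold gammaPDFReal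
  split_ifs with hx
  · rw [add_sub_cancel_right, Gamma_add_one ha.ne', rpow_add_one hr.ne']
    rcases hx.eq_or_lt with rfl | hx
    · simp [zero_rpow ha.ne']
    rw [rpow_sub_one hx.ne']
    have := (Gamma_pos_of_pos ha).ne'
    field_simp
  · simp

lemma integral_mul_gammaMeasure (ha : 0 < a) (hr : 0 < r) (g : ℝ → ℝ) :
    ∫ x, x * g x ∂gammaMeasure a r = a / r * ∫ x, g x ∂gammaMeasure (a + 1) r := by
  rw [integral_gammaMeasure ha hr, integral_gammaMeasure (add_pos ha one_pos) hr,
    ← integral_const_mul]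
  refine integral_congr_ae (ae_of_all _ fun x => ?_)
  simp only [← mul_assoc, ← mul_gammaPDFReal ha hr]
  ring

lemma integrable_mul_gammaMeasure (ha : 0 < a) (hr : 0 < r) {g : ℝ → ℝ}
    (hg : Integrable g (gammaMeasure (a + 1) r)) :
    Integrable (fun x => x * g x) (gammaMeasure a r) := by
  rw [integrable_gammaMeasure_iff (add_pos ha one_pos) hr] at hg
  rw [integrable_gammaMeasure_iff ha hr]
  refine (hg.const_mul (a / r)).congr (ae_of_all _ fun x => ?_)
  simp only [← mul_assoc, ← mul_gammaPDFReal ha hr]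
  ring

lemma integral_id_gammaMeasure (ha : 0 < a) (hr : 0 < r) : (gammaMeasure a r)[id] = a / r := by
  have := isProbabilityMeasure_gammaMeasure (add_pos ha one_pos) hr
  simpa using integral_mul_gammaMeasure ha hr (fun _ => 1)

lemma memLp_id_gammaMeasure (ha : 0 < a) (hr : 0 < r) : MemLp id 2 (gammaMeasure a r) := by
  have ha1 : 0 < a + 1 := add_pos ha one_pos
  have := isProbabilityMeasure_gammaMeasure (add_pos ha1 one_pos) hr
  rw [memLp_two_iff_integrable_sq measurable_id.aestronglyMeasurable]
  simpa [sq] using integrable_mul_gammaMeasure ha hr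
    (by simpa using integrable_mul_gammaMeasure ha1 hr (integrable_const (1 : ℝ)))

lemma variance_id_gammaMeasure (ha : 0 < a) (hr : 0 < r) :
    variance id (gammaMeasure a r) = a / r ^ 2 := by
  have := isProbabilityMeasure_gammaMeasure ha hr
  have hsq : (gammaMeasure a r)[id ^ 2] = a / r * ((a + 1) / r) := by
    rw [← integral_id_gammaMeasure (add_pos ha one_pos) hr, ← integral_mul_gammaMeasure ha hr]
    simp [sq]
  rw [variance_eq_sub (memLp_id_gammaMeasure ha hr), hsq, integral_id_gammaMeasure ha hr]
  field_simp
  ring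

end ProbabilityTheory

theorem ergodic_rate_ratio_tendsto_one (m θ P N₀ : ℝ)
    (hm : 0 < m) (hθ : 0 < θ) (hP : 0 < P) (hN : 0 < N₀) :
    Tendsto (fun L : ℕ =>
        (∫ x, Real.log (1 + (P / N₀) * x) ∂(gammaMeasure (m * L) θ⁻¹)) /
          Real.log (1 + (P / N₀) * (θ * m * L))) atTop (nhds 1) := by
  have hr : 0 < θ⁻¹ := inv_pos.2 hθ
  have hshape : ∀ᶠ L : ℕ in atTop, 0 < m * L :=
    (eventually_gt_atTop 0).mono fun L hL => mul_pos hm (Nat.cast_pos.2 hL)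
  have hmean : ∀ᶠ L : ℕ in atTop, (gammaMeasure (m * L) θ⁻¹)[id] = θ * m * L :=
    hshape.mono fun L h => by rw [integral_id_gammaMeasure h hr]; field_simp
  have hvar : ∀ᶠ L : ℕ in atTop,
      variance id (gammaMeasure (m * L) θ⁻¹) / (gammaMeasure (m * L) θ⁻¹)[id] ^ 2 = (m * L)⁻¹ :=
    hshape.mono fun L h => by
      rw [variance_id_gammaMeasure h hr, integral_id_gammaMeasure h hr]; field_simp
  have hlim := tendsto_integral_log_one_add_mul_div_log_one_add_mul_integral (X := id)
    (div_pos hP hN) (hshape.mono fun _ h => isProbabilityMeasure_gammaMeasure h hr)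
    (Eventually.of_forall fun _ => ae_nonneg_gammaMeasure)
    (hshape.mono fun _ h => memLp_id_gammaMeasure h hr)
    ((tendsto_natCast_atTop_atTop.const_mul_atTop (mul_pos hθ hm)).congr'
      (hmean.mono fun _ h => h.symm))
    ((tendsto_natCast_atTop_atTop.const_mul_atTop hm).inv_tendsto_atTop.congr'
      (hvar.mono fun _ h => h.symm))
  exact hlim.congr' (hmean.mono fun L h => by rw [h]; rfl)
end

section
/- For the choice a_L = log(1 + αβL) with 0 < α < 1 and β > 0, we have 1 − r_L = −(log α)/log L + O(1/(log L)²) as L → ∞, where r_L = [log(1 + αβL)/log(1 + βL)] · Q(mL, αmL); in particular the convergence of r_L to 1 is Θ(1/log L). -/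
open Filter Asymptotics

noncomputable def rL (α β m L : ℝ) : ℝ :=
  (Real.log (1 + α * β * L) / Real.log (1 + β * L)) *
    normUpperIncGamma (m * L) (α * m * L)

/-!
Write `A = log (1 + αβL)` and `B = log (1 + βL)`. Both are `log L` plus a constant up to
`O(1/L)`, and the constants differ by `log α`; hence `1 - A/B = (B - A)/B` equals
`-log α / log L` up to `O(1/log² L)`. The Gamma factor `Q(mL, αmL)` falls short of `1` by the
normalized lower incomplete Gamma integral, which a Chernoff bound makes at most
`exp(-mL(α - 1 - log α))`: exponentially small, since `log α < α - 1`. The main term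
`-log α / log L` then dominates the `O(1/log² L)` error, which gives the `Θ(1/log L)` rate.
-/

open Real MeasureTheory Set

lemma integrableOn_rpow_mul_exp_neg_mul_Ioi {a r : ℝ} (ha : 0 < a) (hr : 0 < r) :
    IntegrableOn (fun t : ℝ => t ^ (a - 1) * exp (-(r * t))) (Ioi 0) :=
  Integrable.of_integral_ne_zero <| by
    rw [integral_rpow_mul_exp_neg_mul_Ioi ha hr]; positivity

lemma integrableOn_rpow_mul_exp_neg_Ioi {a : ℝ} (ha : 0 < a) :
    IntegrableOn (fun t : ℝ => t ^ (a - 1) * exp (-t)) (Ioi 0) := by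
  simpa using integrableOn_rpow_mul_exp_neg_mul_Ioi ha one_pos

lemma one_sub_normUpperIncGamma_eq {a x : ℝ} (ha : 0 < a) (hx : 0 ≤ x) :
    1 - normUpperIncGamma a x = (∫ t in Ioc 0 x, t ^ (a - 1) * exp (-t)) / Gamma a := by
  have hint := integrableOn_rpow_mul_exp_neg_Ioi ha
  have hsplit : Gamma a = (∫ t in Ioc 0 x, t ^ (a - 1) * exp (-t)) + upperIncGamma a x := by
    rw [upperIncGamma, ← setIntegral_union (Ioc_disjoint_Ioi le_rfl) measurableSet_Ioi
      (hint.mono_set Ioc_subset_Ioi_self) (hint.mono_set (Ioi_subset_Ioi hx)),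
      Ioc_union_Ioi_eq_Ioi hx, Gamma_eq_integral ha]
    simp_rw [mul_comm]
  rw [normUpperIncGamma, eq_div_iff (Gamma_pos_of_pos ha).ne', sub_mul, one_mul,
    div_mul_cancel₀ _ (Gamma_pos_of_pos ha).ne', hsplit]
  ring

lemma one_sub_normUpperIncGamma_nonneg {a x : ℝ} (ha : 0 < a) (hx : 0 ≤ x) :
    0 ≤ 1 - normUpperIncGamma a x := by
  rw [one_sub_normUpperIncGamma_eq ha hx]
  refine div_nonneg (setIntegral_nonneg measurableSet_Ioc fun t ht => ?_) (Gamma_pos_of_pos ha).le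
  exact mul_nonneg (rpow_nonneg ht.1.le _) (exp_pos _).le

/-- Chernoff bound: on `(0, x]` we have `e^{-t} ≤ e^{(r-1)x} e^{-rt}`, and integrating the right
side over all of `(0, ∞)` gives `e^{(r-1)x} r^{-a} Γ(a)`. -/
lemma one_sub_normUpperIncGamma_le {a x r : ℝ} (ha : 0 < a) (hx : 0 ≤ x) (hr : 1 ≤ r) :
    1 - normUpperIncGamma a x ≤ exp ((r - 1) * x - a * log r) := by
  have hr0 : 0 < r := one_pos.trans_le hr
  have hint :
      IntegrableOn (fun t => exp ((r - 1) * x) * (t ^ (a - 1) * exp (-(r * t)))) (Ioi 0) :=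
    (integrableOn_rpow_mul_exp_neg_mul_Ioi ha hr0).const_mul _
  have hlower : ∫ t in Ioc 0 x, t ^ (a - 1) * exp (-t)
      ≤ exp ((r - 1) * x) * ((1 / r) ^ a * Gamma a) := calc
    _ ≤ ∫ t in Ioc 0 x, exp ((r - 1) * x) * (t ^ (a - 1) * exp (-(r * t))) := by
      refine setIntegral_mono_on ?_ (hint.mono_set Ioc_subset_Ioi_self) measurableSet_Ioc
        fun t ht => ?_
      · exact (integrableOn_rpow_mul_exp_neg_Ioi ha).mono_set Ioc_subset_Ioi_self
      · rw [mul_left_comm, ← exp_add]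
        gcongr
        · exact rpow_nonneg ht.1.le _
        · nlinarith [ht.2]
    _ ≤ ∫ t in Ioi 0, exp ((r - 1) * x) * (t ^ (a - 1) * exp (-(r * t))) := by
      refine setIntegral_mono_set hint ?_ Ioc_subset_Ioi_self.eventuallyLE
      filter_upwards [ae_restrict_mem measurableSet_Ioi] with t ht
      have := rpow_nonneg (le_of_lt ht) (a - 1)
      positivity
    _ = exp ((r - 1) * x) * ((1 / r) ^ a * Gamma a) := by
      rw [integral_const_mul, integral_rpow_mul_exp_neg_mul_Ioi ha hr0]
  rw [one_sub_normUpperIncGamma_eq ha hx, div_le_iff₀ (Gamma_pos_of_pos ha)]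
  refine hlower.trans_eq ?_
  rw [rpow_def_of_pos (by positivity), log_div one_ne_zero hr0.ne', log_one, ← mul_assoc,
    ← exp_add]
  ring_nf

lemma one_sub_normUpperIncGamma_mul_le {a α : ℝ} (ha : 0 < a) (hα0 : 0 < α) (hα1 : α ≤ 1) :
    1 - normUpperIncGamma a (α * a) ≤ exp (-(a * (α - 1 - log α))) := by
  convert one_sub_normUpperIncGamma_le (x := α * a) ha (by positivity)
    (one_le_one_div hα0 hα1) using 2
  rw [one_div, log_inv]
  field_simp
  ring

lemma isBigO_one_sub_normUpperIncGamma {α m : ℝ} (hα0 : 0 < α) (hα1 : α < 1) (hm : 0 < m) :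
    (fun L => 1 - normUpperIncGamma (m * L) (α * m * L)) =O[atTop] fun L => 1 / L := by
  set κ := m * (α - 1 - log α)
  have hκ : 0 < κ := mul_pos hm (by linarith [log_lt_sub_one_of_pos hα0 hα1.ne])
  refine IsBigO.of_bound κ⁻¹ ?_
  filter_upwards [eventually_gt_atTop 0] with L hL
  have hmL : 0 < m * L := mul_pos hm hL
  rw [mul_assoc, norm_of_nonneg (one_sub_normUpperIncGamma_nonneg hmL (by positivity)),
    norm_of_nonneg (by positivity)]
  calc 1 - normUpperIncGamma (m * L) (α * (m * L)) ≤ exp (-(κ * L)) := by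
        convert one_sub_normUpperIncGamma_mul_le hmL hα0 hα1.le using 3; ring
    _ ≤ (κ * L)⁻¹ := by
        rw [exp_neg]
        exact inv_anti₀ (by positivity) ((le_add_of_nonneg_right zero_le_one).trans
          (add_one_le_exp _))
    _ = κ⁻¹ * (1 / L) := by rw [mul_inv, one_div]

lemma one_div_isBigO_one_div_log_sq :
    (fun L : ℝ => 1 / L) =O[atTop] fun L => 1 / log L ^ 2 := by
  simp only [one_div]
  refine (isLittleO_pow_log_id_atTop (n := 2)).isBigO.inv_rev ?_
  filter_upwards [eventually_gt_atTop 1] with L hL h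
  exact absurd h (pow_ne_zero 2 (log_pos hL).ne')

lemma one_div_log_isLittleO_one : (fun L : ℝ => 1 / log L) =o[atTop] fun _ => (1 : ℝ) := by
  simpa only [isLittleO_one_iff, one_div, Function.comp_def] using
    tendsto_inv_atTop_zero.comp tendsto_log_atTop

lemma one_div_log_sq_isLittleO_one_div_log :
    (fun L : ℝ => 1 / log L ^ 2) =o[atTop] fun L => 1 / log L := by
  refine (one_div_log_isLittleO_one.mul_isBigO (isBigO_refl (fun L => 1 / log L) _)).congr
    (fun L => by ring) (fun L => by ring)

lemma isBigO_log_one_add_mul_sub {b : ℝ} (hb : 0 < b) :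
    (fun L => log (1 + b * L) - log b - log L) =O[atTop] fun L => 1 / L := by
  refine IsBigO.of_bound b⁻¹ ?_
  filter_upwards [eventually_gt_atTop 0] with L hL
  have hbL : 0 < b * L := by positivity
  have heq : log (1 + b * L) - log b - log L = log (1 + 1 / (b * L)) := by
    rw [sub_sub, ← log_mul hb.ne' hL.ne', ← log_div (by positivity) hbL.ne']
    congr 1; field_simp; ring
  have hle := log_le_sub_one_of_pos (show 0 < 1 + 1 / (b * L) by positivity)
  rw [heq, norm_of_nonneg (log_nonneg (le_add_of_nonneg_right (by positivity))),
    norm_of_nonneg (by positivity)]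
  calc log (1 + 1 / (b * L)) ≤ 1 / (b * L) := by linarith
    _ = b⁻¹ * (1 / L) := by field_simp

lemma isBigO_one_sub_log_div_log {α β : ℝ} (hα : 0 < α) (hβ : 0 < β) :
    (fun L => (1 - log (1 + α * β * L) / log (1 + β * L)) - -log α / log L) =O[atTop]
      fun L => 1 / log L ^ 2 := by
  have hA := isBigO_log_one_add_mul_sub (mul_pos hα hβ)
  have hB := isBigO_log_one_add_mul_sub hβ
  have hdiff : (fun L => log (1 + β * L) - log (1 + α * β * L) + log α) =O[atTop]
      fun L => 1 / log L ^ 2 :=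
    ((hB.sub hA).congr_left fun L => by rw [log_mul hα.ne' hβ.ne']; ring).trans
      one_div_isBigO_one_div_log_sq
  have hBlog : (fun L => log (1 + β * L) - log L) =O[atTop] fun _ => (1 : ℝ) :=
    ((hB.trans (tendsto_inv_atTop_zero.isBigO_one ℝ |>.congr_left fun L => (one_div L).symm)).add
      (isBigO_const_one ℝ (log β) _)).congr_left fun L => by ring
  have hBinv : (fun L => 1 / log (1 + β * L)) =O[atTop] fun L => 1 / log L := by
    have hequiv : (fun L => log (1 + β * L)) ~[atTop] log :=
      hBlog.trans_isLittleO
        ((isLittleO_one_left_iff ℝ).2 (tendsto_norm_atTop_atTop.comp tendsto_log_atTop))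
    simpa only [one_div, Pi.inv_def] using hequiv.inv.isBigO
  have hfirst := (hdiff.mul (hBinv.trans one_div_log_isLittleO_one.isBigO)).congr_right
    fun L => mul_one _
  have hsecond := (((hBlog.neg_left.const_mul_left (-log α)).mul hBinv).mul
    (isBigO_refl (fun L => 1 / log L) atTop)).congr_right (g₂ := fun L => 1 / log L ^ 2)
    fun L => by ring
  -- `1 - A/B + log α / log L = (B - A + log α) / B - log α (log L - B) / (B log L)`
  refine (hfirst.add hsecond).congr' ?_ (Eventually.of_forall fun L => by ring)
  filter_upwards [eventually_gt_atTop 1] with L hL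
  have hlog : 0 < log L := log_pos hL
  have hB : 0 < log (1 + β * L) := log_pos (by nlinarith)
  field_simp
  ring

lemma log_one_add_div_log_one_add_isBigO_one {α β : ℝ} (hα0 : 0 ≤ α) (hα1 : α ≤ 1)
    (hβ : 0 < β) :
    (fun L => log (1 + α * β * L) / log (1 + β * L)) =O[atTop] fun _ => (1 : ℝ) := by
  refine IsBigO.of_bound 1 ?_
  filter_upwards [eventually_gt_atTop 0] with L hL
  have hB : 0 < log (1 + β * L) := log_pos (by nlinarith)
  have hαβL : 0 ≤ α * β * L := by positivity
  rw [norm_of_nonneg (div_nonneg (log_nonneg (by linarith)) hB.le), norm_one, mul_one,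
    div_le_one hB]
  exact log_le_log (by linarith) (by nlinarith [mul_pos hβ hL])

theorem rL_convergence_rate (α β m : ℝ) (hα0 : 0 < α) (hα1 : α < 1)
    (hβ : 0 < β) (hm : 0 < m) :
    ((fun L : ℝ => (1 - rL α β m L) - (-(Real.log α) / Real.log L)) =O[atTop]
      fun L : ℝ => 1 / (Real.log L) ^ 2) ∧
    ((fun L : ℝ => 1 - rL α β m L) =Θ[atTop] fun L : ℝ => 1 / Real.log L) := by
  have hgamma := ((log_one_add_div_log_one_add_isBigO_one hα0.le hα1.le hβ).mul
    (isBigO_one_sub_normUpperIncGamma hα0 hα1 hm)).congr_right (fun L => one_mul (1 / L))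
  have hrate : (fun L : ℝ => (1 - rL α β m L) - (-(Real.log α) / Real.log L)) =O[atTop]
      fun L : ℝ => 1 / (Real.log L) ^ 2 :=
    ((isBigO_one_sub_log_div_log hα0 hβ).add (hgamma.trans one_div_isBigO_one_div_log_sq))
      |>.congr_left fun L => by rw [rL]; ring
  refine ⟨hrate, ?_⟩
  have hsplit : (fun L : ℝ => 1 - rL α β m L) = (fun L => -log α * (1 / log L)) +
      fun L => (1 - rL α β m L) - (-(Real.log α) / Real.log L) := by
    funext L; simp only [Pi.add_apply]; ring
  rw [hsplit]
  exact ((isTheta_const_mul_left (neg_ne_zero.2 (log_neg hα0 hα1).ne)).2 (isTheta_refl _ _))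
    |>.add_isLittleO (hrate.trans_isLittleO one_div_log_sq_isLittleO_one_div_log)
end
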